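/- Let R be a field, x ∈ X, and let φ : ℙ_{[x]} → ℙ_{[x]} be an R-linear map commuting with all operators P_{Z_μ} and S_c S_d* (c, d, μ finite words in the language). Then φ is a scalar multiple of the identity. Consequently, the commutant algebra of the representation on ℙ_{[x]} is isomorphic to R. -/

import Mathlib

/-- The iterated shift: `shiftN x n = σⁿ(x)`. -/
def shiftN {A : Type*} (x : ℕ → A) (n : ℕ) : ℕ → A := fun k => x (k + n)

/-- Tail equivalence: `x ∼ y` iff `σⁿ(x) = σᵐ(y)` for some `n, m ∈ ℕ`. -/
def tailEq {A : Type*} (x y : ℕ → A) : Prop := ∃ n m : ℕ, shiftN x n = shiftN y m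

/-- Concatenation of a finite word with an infinite sequence. -/
def wcat {A : Type*} (w : List A) (x : ℕ → A) : ℕ → A :=
  fun n => if h : n < w.length then w.get ⟨n, h⟩ else x (n - w.length)

/-- The language of `X`: finite words appearing in some element of `X`. -/
def inLang {A : Type*} (X : Set (ℕ → A)) (w : List A) : Prop :=
  ∃ x ∈ X, ∃ k : ℕ, ∀ i (h : i < w.length), w.get ⟨i, h⟩ = x (k + i)

/-- The periodic infinite word `w^∞`. -/
def perInf {A : Type*} (w : List A) (h : w ≠ []) : ℕ → A :=
  fun n => w.get ⟨n % w.length, Nat.mod_lt n (List.length_pos_iff.mpr h)⟩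

/-- `q` is a line path in `X`. -/
def IsLinePath {A : Type*} (X : Set (ℕ → A)) (q : ℕ → A) : Prop :=
  q ∈ X ∧ {x | x ∈ X ∧ x 0 = q 0} = {q} ∧
    ∀ (β : List A) (hβ : β ≠ []) (k : ℕ), shiftN q k ≠ perInf β hβ


variable {A : Type*} (R : Type*) [Field R] (X : Set (ℕ → A))

open Classical

/-- Projection `P_B(δ_x) = [x ∈ B] δ_x` on the free module on `X`. -/
noncomputable def Pop (B : Set (ℕ → A)) : (↥X →₀ R) →ₗ[R] (↥X →₀ R) :=
  Finsupp.lsum R fun x => if (x : ℕ → A) ∈ B then Finsupp.lsingle x else 0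

/-- `S_a(δ_x) = [ax ∈ X] δ_{ax}`. -/
noncomputable def Sop (a : A) : (↥X →₀ R) →ₗ[R] (↥X →₀ R) :=
  Finsupp.lsum R fun x =>
    if h : wcat [a] (x : ℕ → A) ∈ X then Finsupp.lsingle (⟨wcat [a] (x : ℕ → A), h⟩ : ↥X) else 0

/-- `S_a^*(δ_x) = [x₀ = a] δ_{σ(x)}`, needing shift invariance of `X`. -/
noncomputable def SstarOp (hX : ∀ x ∈ X, shiftN x 1 ∈ X) (a : A) :
    (↥X →₀ R) →ₗ[R] (↥X →₀ R) :=
  Finsupp.lsum R fun x =>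
    if (x : ℕ → A) 0 = a then
      Finsupp.lsingle (⟨shiftN (x : ℕ → A) 1, hX x x.2⟩ : ↥X) else 0

/-- `S_α = S_{α₁} ∘ ⋯ ∘ S_{αₙ}`. -/
noncomputable def SwordOp (β : List A) : (↥X →₀ R) →ₗ[R] (↥X →₀ R) :=
  (β.map (Sop R X)).foldr (· ∘ₗ ·) LinearMap.id

/-- `S_α^* = S_{αₙ}^* ∘ ⋯ ∘ S_{α₁}^*`. -/
noncomputable def SstarWordOp (hX : ∀ x ∈ X, shiftN x 1 ∈ X) (α : List A) :
    (↥X →₀ R) →ₗ[R] (↥X →₀ R) :=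
  (α.map (SstarOp R X hX)).foldl (fun acc f => f ∘ₗ acc) LinearMap.id

/-- `C(α,β) = {βx ∈ X : αx ∈ X}`. -/
def Cset (α β : List A) : Set (ℕ → A) :=
  {y | ∃ x : ℕ → A, y = wcat β x ∧ wcat β x ∈ X ∧ wcat α x ∈ X}

/-- The cylinder `Z_μ`. -/
def Zcyl (μ : List A) : Set (ℕ → A) := {y | y ∈ X ∧ ∃ x : ℕ → A, y = wcat μ x}

/-- `ℙ_{[x]}`: the submodule spanned by `{δ_y : y ∼ x}`. -/
noncomputable def Pclass (x : ℕ → A) : Submodule R (↥X →₀ R) :=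
  Submodule.span R {f | ∃ y : ↥X, tailEq (y : ℕ → A) x ∧ f = Finsupp.single y (1 : R)}

/-!
Cylinder projections separate points: if `z ≠ y` then `z` and `y` differ in some letter `k`, and
`P_{Z_μ}` with `μ = y₀ ⋯ y_k` fixes `δ_y` and kills `δ_z`. Hence an operator commuting with all of
them maps `δ_x` to a multiple `γ δ_x`. If `σⁿ(y) = σᵐ(x)`, then `S_c S_d^*` with `c = y₀ ⋯ y_{n-1}`
and `d = x₀ ⋯ x_{m-1}` maps `δ_x` to `δ_y`, so commuting with it gives `φ δ_y = γ δ_y`; these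
`δ_y` span `ℙ_{[x]}`.
-/

def wordPrefix (y : ℕ → A) (n : ℕ) : List A := List.ofFn fun i : Fin n => y i

lemma shiftN_shiftN (y : ℕ → A) (m n : ℕ) : shiftN (shiftN y m) n = shiftN y (m + n) := by
  funext k
  exact congrArg y (by omega)

lemma wordPrefix_succ (y : ℕ → A) (n : ℕ) :
    wordPrefix y (n + 1) = y 0 :: wordPrefix (shiftN y 1) n := by
  simp [wordPrefix, List.ofFn_succ, shiftN]

lemma wordPrefix_succ' (y : ℕ → A) (n : ℕ) :
    wordPrefix y (n + 1) = wordPrefix y n ++ [y n] := by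
  simp only [wordPrefix, List.ofFn_succ', List.concat_eq_append]
  rfl

lemma wcat_wordPrefix_shiftN (y : ℕ → A) (n : ℕ) :
    wcat (wordPrefix y n) (shiftN y n) = y := by
  funext k
  by_cases hk : k < n
  · simp [wcat, wordPrefix, hk]
  · simp [wcat, wordPrefix, hk, shiftN, Nat.sub_add_cancel (not_lt.mp hk)]

lemma wcat_singleton_shiftN_one (y : ℕ → A) : wcat [y 0] (shiftN y 1) = y := by
  simpa [wordPrefix] using wcat_wordPrefix_shiftN y 1

lemma wcat_wordPrefix_apply_of_lt (y w : ℕ → A) {n k : ℕ} (hk : k < n) :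
    wcat (wordPrefix y n) w k = y k := by
  simp [wcat, wordPrefix, hk]

variable {X}

lemma shiftN_mem (hX : ∀ x ∈ X, shiftN x 1 ∈ X) {y : ℕ → A} (hy : y ∈ X) (n : ℕ) :
    shiftN y n ∈ X := by
  induction n with
  | zero => exact hy
  | succ n ih => simpa only [shiftN_shiftN] using hX _ ih

lemma mem_Zcyl_wordPrefix {y : ℕ → A} (hy : y ∈ X) (n : ℕ) : y ∈ Zcyl X (wordPrefix y n) :=
  ⟨hy, shiftN y n, (wcat_wordPrefix_shiftN y n).symm⟩

lemma not_mem_Zcyl_wordPrefix {y z : ℕ → A} {k : ℕ} (hk : z k ≠ y k) :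
    z ∉ Zcyl X (wordPrefix y (k + 1)) := by
  rintro ⟨-, w, rfl⟩
  exact hk (wcat_wordPrefix_apply_of_lt y w k.lt_succ_self)

lemma single_congr {y z : ℕ → A} (hy : y ∈ X) (hz : z ∈ X) (h : y = z) (r : R) :
    Finsupp.single (⟨y, hy⟩ : ↥X) r = Finsupp.single ⟨z, hz⟩ r := by
  subst h
  rfl

lemma Pop_single (B : Set (ℕ → A)) (y : ↥X) (r : R) :
    Pop R X B (Finsupp.single y r) = if (y : ℕ → A) ∈ B then Finsupp.single y r else 0 := by
  rw [Pop, Finsupp.lsum_single]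
  split_ifs <;> rfl

lemma Pop_apply (B : Set (ℕ → A)) (f : ↥X →₀ R) (z : ↥X) :
    Pop R X B f z = if (z : ℕ → A) ∈ B then f z else 0 := by
  induction f using Finsupp.induction_linear with
  | zero => simp
  | add f g hf hg => simp only [map_add, Finsupp.add_apply, hf, hg]; split_ifs <;> simp
  | single y r =>
      rw [Pop_single]
      by_cases hzy : z = y
      · subst hzy
        split_ifs <;> simp
      · split_ifs <;> simp [Finsupp.single_eq_of_ne' (Ne.symm hzy)]

lemma Sop_single (a : A) (y : ↥X) (h : wcat [a] (y : ℕ → A) ∈ X) (r : R) :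
    Sop R X a (Finsupp.single y r) = Finsupp.single ⟨wcat [a] y, h⟩ r := by
  rw [Sop, Finsupp.lsum_single, dif_pos h]
  rfl

lemma SstarOp_single (hX : ∀ x ∈ X, shiftN x 1 ∈ X) {a : A} (y : ↥X) (h : (y : ℕ → A) 0 = a)
    (r : R) :
    SstarOp R X hX a (Finsupp.single y r)
      = Finsupp.single ⟨shiftN y 1, hX y y.2⟩ r := by
  rw [SstarOp, Finsupp.lsum_single, if_pos h]
  rfl

lemma SwordOp_cons (a : A) (c : List A) :
    SwordOp R X (a :: c) = Sop R X a ∘ₗ SwordOp R X c := rfl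

lemma SstarWordOp_append_singleton (hX : ∀ x ∈ X, shiftN x 1 ∈ X) (d : List A) (a : A) :
    SstarWordOp R X hX (d ++ [a]) = SstarOp R X hX a ∘ₗ SstarWordOp R X hX d := by
  unfold SstarWordOp
  rw [List.map_append, List.foldl_append]
  rfl

lemma SwordOp_wordPrefix_single (hX : ∀ x ∈ X, shiftN x 1 ∈ X) {y : ℕ → A} (hy : y ∈ X)
    (n : ℕ) :
    SwordOp R X (wordPrefix y n) (Finsupp.single ⟨shiftN y n, shiftN_mem hX hy n⟩ 1)
      = Finsupp.single ⟨y, hy⟩ (1 : R) := by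
  induction n generalizing y with
  | zero => rfl
  | succ n ih =>
      have hy₁ : shiftN y 1 ∈ X := hX y hy
      have hcons : wcat [y 0] (shiftN y 1) ∈ X := by rwa [wcat_singleton_shiftN_one]
      rw [wordPrefix_succ, SwordOp_cons, LinearMap.comp_apply,
        single_congr R _ (shiftN_mem hX hy₁ n) (by rw [shiftN_shiftN, Nat.add_comm]), ih hy₁,
        Sop_single R (y 0) ⟨_, hy₁⟩ hcons]
      exact single_congr R _ _ (wcat_singleton_shiftN_one y) 1

lemma SstarWordOp_wordPrefix_single (hX : ∀ x ∈ X, shiftN x 1 ∈ X) {y : ℕ → A}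
    (hy : y ∈ X) (m : ℕ) :
    SstarWordOp R X hX (wordPrefix y m) (Finsupp.single ⟨y, hy⟩ 1)
      = Finsupp.single ⟨shiftN y m, shiftN_mem hX hy m⟩ (1 : R) := by
  induction m with
  | zero => rfl
  | succ m ih =>
      rw [wordPrefix_succ', SstarWordOp_append_singleton, LinearMap.comp_apply, ih]
      rw [SstarOp_single R hX ⟨shiftN y m, shiftN_mem hX hy m⟩ (by simp [shiftN])]
      exact single_congr R _ _ (shiftN_shiftN y m 1) 1

lemma exists_SwordOp_SstarWordOp_single_eq (hX : ∀ x ∈ X, shiftN x 1 ∈ X) {x y : ℕ → A}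
    (hx : x ∈ X) (hy : y ∈ X) (hyx : tailEq y x) :
    ∃ c d : List A, (SwordOp R X c ∘ₗ SstarWordOp R X hX d) (Finsupp.single ⟨x, hx⟩ 1)
      = Finsupp.single ⟨y, hy⟩ (1 : R) := by
  obtain ⟨n, m, hnm⟩ := hyx
  refine ⟨wordPrefix y n, wordPrefix x m, ?_⟩
  rw [LinearMap.comp_apply, SstarWordOp_wordPrefix_single R hX hx,
    single_congr R _ (shiftN_mem hX hy n) hnm.symm, SwordOp_wordPrefix_single R hX hy]

lemma single_mem_Pclass {x : ℕ → A} (y : ↥X) (hyx : tailEq (y : ℕ → A) x) :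
    Finsupp.single y (1 : R) ∈ Pclass R X x :=
  Submodule.subset_span ⟨y, hyx, rfl⟩

lemma map_single_eq_smul_of_commute_Pop (φ : (↥X →₀ R) →ₗ[R] (↥X →₀ R)) (y : ↥X)
    (hφP : ∀ μ : List A,
      φ (Pop R X (Zcyl X μ) (Finsupp.single y 1)) = Pop R X (Zcyl X μ) (φ (Finsupp.single y 1))) :
    φ (Finsupp.single y 1) = φ (Finsupp.single y 1) y • Finsupp.single y 1 := by
  ext z
  rcases eq_or_ne z y with rfl | hzy
  · simp
  obtain ⟨k, hk⟩ := Function.ne_iff.mp fun h => hzy (Subtype.ext h)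
  have hfix := hφP (wordPrefix y (k + 1))
  rw [Pop_single, if_pos (mem_Zcyl_wordPrefix y.2 _)] at hfix
  rw [hfix, Pop_apply, if_neg (not_mem_Zcyl_wordPrefix hk)]
  simp [Finsupp.single_eq_of_ne' (Ne.symm hzy)]

theorem Pclass_commutant_scalar_general {A : Type*} (R : Type*) [Field R]
    (X : Set (ℕ → A)) (hX : ∀ x ∈ X, shiftN x 1 ∈ X) (x : ℕ → A) (hx : x ∈ X)
    (φ : (↥X →₀ R) →ₗ[R] (↥X →₀ R))
    (hφP : ∀ μ : List A, ∀ v ∈ Pclass R X x,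
      φ (Pop R X (Zcyl X μ) v) = Pop R X (Zcyl X μ) (φ v))
    (hφS : ∀ c d : List A, ∀ v ∈ Pclass R X x,
      φ ((SwordOp R X c ∘ₗ SstarWordOp R X hX d) v)
        = (SwordOp R X c ∘ₗ SstarWordOp R X hX d) (φ v)) :
    ∃ γ : R, ∀ v ∈ Pclass R X x, φ v = γ • v := by
  set δx : ↥X →₀ R := Finsupp.single ⟨x, hx⟩ 1
  have hδx : δx ∈ Pclass R X x := single_mem_Pclass R ⟨x, hx⟩ ⟨0, 0, rfl⟩
  obtain ⟨γ, heig⟩ : ∃ γ : R, φ δx = γ • δx :=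
    ⟨_, map_single_eq_smul_of_commute_Pop R φ ⟨x, hx⟩ fun μ => hφP μ δx hδx⟩
  refine ⟨γ, fun v hv => LinearMap.eqOn_span (g := γ • LinearMap.id) ?_ hv⟩
  rintro _ ⟨⟨y, hy⟩, hyx, rfl⟩
  obtain ⟨c, d, hcd⟩ := exists_SwordOp_SstarWordOp_single_eq R hX hx hy hyx
  rw [LinearMap.smul_apply, LinearMap.id_apply, ← hcd, hφS c d δx hδx, heig, map_smul]

/-- over a field, any linear endomorphism of `ℙ_{[x]}` commuting
with all `P_{Z_μ}` and all `S_c S_d^*` is a scalar multiple of the identity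
(hence the commutant is isomorphic to `R`). -/
theorem Pclass_commutant_scalar {A : Type*} (R : Type*) [Field R]
    (X : Set (ℕ → A)) (hX : ∀ x ∈ X, shiftN x 1 ∈ X) (x : ℕ → A) (hx : x ∈ X)
    (φ : (↥X →₀ R) →ₗ[R] (↥X →₀ R))
    (hφmap : ∀ v ∈ Pclass R X x, φ v ∈ Pclass R X x)
    (hφP : ∀ μ : List A, ∀ v ∈ Pclass R X x,
      φ (Pop R X (Zcyl X μ) v) = Pop R X (Zcyl X μ) (φ v))
    (hφS : ∀ c d : List A, ∀ v ∈ Pclass R X x,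
      φ ((SwordOp R X c ∘ₗ SstarWordOp R X hX d) v)
        = (SwordOp R X c ∘ₗ SstarWordOp R X hX d) (φ v)) :
    ∃ γ : R, ∀ v ∈ Pclass R X x, φ v = γ • v :=
  Pclass_commutant_scalar_general R X hX x hx φ hφP hφS
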